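/- Let D be a bounded open subset of C^r(S¹) and fix R with R > ‖τ′‖_∞ for all τ ∈ D. For every ρ > 0, the set {τ ∈ D : 𝔫(τ) < e^ρ} is open in the C^r topology; that is, 𝔫(τ) < e^ρ is an open condition on τ. -/

import Mathlib

noncomputable section

open Filter Set Topology MeasureTheory

/-- The circle `ℝ/ℤ`. -/
abbrev 𝕊 : Type := UnitAddCircle

/-- The canonical representative in `[0,1)` of a point of the circle. -/
def rep (x : 𝕊) : ℝ := (AddCircle.equivIco 1 0 x : ℝ)

/-- A `C^r` expanding map of the circle of degree `ℓ`, presented by a lift `ℝ → ℝ`,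
together with the expansion constants `1 < λ ≤ Λ` bounding its derivative. -/
structure ExpMap (r : ℕ) (ℓ : ℕ) : Type where
  toFun : ℝ → ℝ
  contDiff : ContDiff ℝ r toFun
  degree : ∀ x : ℝ, toFun (x + 1) = toFun x + ℓ
  lam : ℝ
  Lam : ℝ
  one_lt_lam : 1 < lam
  lam_le_Lam : lam ≤ Lam
  lam_le_deriv : ∀ x : ℝ, lam ≤ deriv toFun x
  deriv_le_Lam : ∀ x : ℝ, deriv toFun x ≤ Lam

/-- A real-valued `C^s` function on the circle, presented by a `1`-periodic lift. -/
structure CrFun (s : ℕ∞) : Type where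
  toFun : ℝ → ℝ
  contDiff : ContDiff ℝ s toFun
  periodic : ∀ x : ℝ, toFun (x + 1) = toFun x

variable {r ℓ : ℕ}

/-- The induced map on the circle. -/
def ExpMap.map (E : ExpMap r ℓ) : 𝕊 → 𝕊 := fun x => ((E.toFun (rep x) : ℝ) : 𝕊)

/-- `(E^n)'(x)`, the derivative of the `n`-th iterate at a circle point. -/
def ExpMap.derivn (E : ExpMap r ℓ) (n : ℕ) (x : 𝕊) : ℝ := deriv (E.toFun^[n]) (rep x)

/-- `‖τ'‖_∞`, the sup-norm of the derivative of `τ`. -/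
def CrFun.dsup {s : ℕ∞} (τ : CrFun s) : ℝ :=
  sSup ((fun x => |deriv τ.toFun x|) '' Set.Icc (0:ℝ) 1)

/-- The skew product `f = f_{E,τ} : 𝕋² → 𝕋²`, `f(x,s) = (E x, s + τ x)`. -/
def skew (E : ExpMap r ℓ) {s : ℕ∞} (τ : CrFun s) : 𝕊 × 𝕊 → 𝕊 × 𝕊 :=
  fun z => (E.map z.1, z.2 + ((τ.toFun (rep z.1) : ℝ) : 𝕊))

/-- The Jacobian matrix `Df(z)`, depending only on the base coordinate. -/
def Jac1 (E : ExpMap r ℓ) {s : ℕ∞} (τ : CrFun s) (x : 𝕊) : Matrix (Fin 2) (Fin 2) ℝ :=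
  !![deriv E.toFun (rep x), 0; deriv τ.toFun (rep x), 1]

/-- The Jacobian matrix `Df^n(z)` of the `n`-th iterate. -/
def Jacn (E : ExpMap r ℓ) {s : ℕ∞} (τ : CrFun s) : ℕ → 𝕊 × 𝕊 → Matrix (Fin 2) (Fin 2) ℝ
  | 0, _ => 1
  | n+1, z => Jacn E τ n (skew E τ z) * Jac1 E τ z.1

/-- `Df^n` as a function of the base point only. -/
def JacnB (E : ExpMap r ℓ) {s : ℕ∞} (τ : CrFun s) (n : ℕ) (x : 𝕊) : Matrix (Fin 2) (Fin 2) ℝ :=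
  Jacn E τ n (x, (0 : 𝕊))

/-- The cone `K_R = {(ξ,η) : |η| ≤ ϑ_R |ξ|}` with `ϑ_R = R/(λ-1)`. -/
def ExpMap.cone (E : ExpMap r ℓ) (R : ℝ) : Set (Fin 2 → ℝ) :=
  {v | |v 1| ≤ R / (E.lam - 1) * |v 0|}

/-- A unit vector of `ℝ²`. -/
def IsUnitVec (v : Fin 2 → ℝ) : Prop := v 0 ^ 2 + v 1 ^ 2 = 1

/-- `𝔫(τ,R;n) = sup_z sup_v #{ζ ∈ f^{-n}(z) : v ∈ Df^n(ζ) K_R}`. -/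
def nQ (E : ExpMap r ℓ) {s : ℕ∞} (τ : CrFun s) (R : ℝ) (n : ℕ) : ℝ :=
  sSup {c : ℝ | ∃ (z : 𝕊 × 𝕊) (v : Fin 2 → ℝ), IsUnitVec v ∧
    c = ({ζ : 𝕊 × 𝕊 | (skew E τ)^[n] ζ = z ∧
      v ∈ (Jacn E τ n ζ).mulVec '' E.cone R}.ncard : ℝ)}

/-- `𝔫(τ) = lim_n 𝔫(τ,R;n)^{1/n}` (computed with the choice `R = ‖τ'‖_∞ + 1`). -/
def nlim (E : ExpMap r ℓ) {s : ℕ∞} (τ : CrFun s) : ℝ :=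
  limUnder atTop (fun n : ℕ => nQ E τ (τ.dsup + 1) n ^ ((n : ℝ)⁻¹))

/-- The `C^r` distance between two (lifts of) functions on the circle. -/
def crDist (r : ℕ) (f g : ℝ → ℝ) : ℝ :=
  sSup {c : ℝ | ∃ i ≤ r, ∃ x ∈ Set.Icc (0:ℝ) 1, c = |iteratedDeriv i f x - iteratedDeriv i g x|}

/-- `x_α`: the preimage point of `x` coded by the word `α = (α_n, …, α_1)`,
given the system `g` of inverse branches of `E`; here `α i` is the letter `α_{i+1}`. -/
def codePt (g : Fin ℓ → 𝕊 → 𝕊) : {n : ℕ} → (Fin n → Fin ℓ) → 𝕊 → 𝕊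
  | 0, _, x => x
  | n+1, α, x => g (α (Fin.last n)) (codePt g (fun i : Fin n => α i.castSucc) x)

/-- `[α]_p`, the truncation of a word to length `p`. -/
def trunc {ℓ n : ℕ} (α : Fin n → Fin ℓ) (p : ℕ) (h : p ≤ n) : Fin p → Fin ℓ :=
  fun i => α (Fin.castLE h i)

/-- `S_n(x;α;ψ) = Σ_{k=1}^n ψ'(x_{[α]_k}) / (E^k)'(x_{[α]_k})`. -/
def Ssum (E : ExpMap r ℓ) (g : Fin ℓ → 𝕊 → 𝕊) (ψ : ℝ → ℝ) {n : ℕ}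
    (α : Fin n → Fin ℓ) (x : 𝕊) : ℝ :=
  ∑ k : Fin n, deriv ψ (rep (codePt g (trunc α (k.1+1) k.isLt) x)) /
    E.derivn (k.1+1) (codePt g (trunc α (k.1+1) k.isLt) x)

/-- `S(x;ω) = Σ_{k=1}^∞ τ'(x_{[ω]_k}) / (E^k)'(x_{[ω]_k})` for an infinite word `ω`. -/
def Sinf (E : ExpMap r ℓ) (g : Fin ℓ → 𝕊 → 𝕊) (ψ : ℝ → ℝ) (y : 𝕊) (ω : ℕ → Fin ℓ) : ℝ :=
  ∑' k : ℕ, deriv ψ (rep (codePt g (fun i : Fin (k+1) => ω i) y)) /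
    E.derivn (k+1) (codePt g (fun i : Fin (k+1) => ω i) y)

/-- Faure's counting function `Ñ_{R̃}(n)`. -/
def Ntilde (E : ExpMap r ℓ) (g : Fin ℓ → 𝕊 → 𝕊) {s : ℕ∞} (τ : CrFun s) (Rt : ℝ) (n : ℕ) : ℝ :=
  sSup {c : ℝ | ∃ (y : 𝕊) (η : ℝ),
    c = ({α : Fin n → Fin ℓ | ∃ ω : ℕ → Fin ℓ, (∀ i : Fin n, ω i = α i) ∧
      |η - Sinf E g τ.toFun y ω| ≤ Rt * (E.derivn n (codePt g α y))⁻¹}.ncard : ℝ)}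

/-- `𝐧(τ,R;n)`. -/
def nnQ (E : ExpMap r ℓ) {s : ℕ∞} (τ : CrFun s) (R : ℝ) (n : ℕ) : ℝ :=
  sSup {c : ℝ | ∃ (z : 𝕊 × 𝕊) (v : Fin 2 → ℝ), IsUnitVec v ∧
    c = ∑ᶠ ζ ∈ {ζ : 𝕊 × 𝕊 | (skew E τ)^[n] ζ = z ∧
        v ∈ (Jacn E τ n ζ).mulVec '' E.cone R}, ((Jacn E τ n ζ).det)⁻¹}

/-- `𝐧(τ) = limsup_n 𝐧(τ,R;n)^{1/n}` (with `R = ‖τ'‖_∞ + 1`). -/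
def nnlim (E : ExpMap r ℓ) {s : ℕ∞} (τ : CrFun s) : ℝ :=
  limsup (fun n : ℕ => nnQ E τ (τ.dsup + 1) n ^ ((n : ℝ)⁻¹)) atTop

/-- `𝐦(τ,R;n)`. -/
def mmQ (E : ExpMap r ℓ) {s : ℕ∞} (τ : CrFun s) (R : ℝ) (n : ℕ) : ℝ :=
  sSup {c : ℝ | ∃ (z w : 𝕊 × 𝕊), (skew E τ)^[n] w = z ∧
    c = ∑ᶠ ζ ∈ {ζ : 𝕊 × 𝕊 | (skew E τ)^[n] ζ = z ∧
        ((Jacn E τ n ζ).mulVec '' E.cone R) ∩ ((Jacn E τ n w).mulVec '' E.cone R) = {0}},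
      ((Jacn E τ n ζ).det)⁻¹}

/-- `𝐦(τ) = limsup_n 𝐦(τ,R;n)^{1/n}` (with `R = ‖τ'‖_∞ + 1`). -/
def mmlim (E : ExpMap r ℓ) {s : ℕ∞} (τ : CrFun s) : ℝ :=
  limsup (fun n : ℕ => mmQ E τ (τ.dsup + 1) n ^ ((n : ℝ)⁻¹)) atTop

/-- `χ = lim_n (min_x (E^n)'(x))^{-1/n}`. -/
def chi (E : ExpMap r ℓ) : ℝ :=
  limUnder atTop (fun n : ℕ => (sInf (Set.range (E.derivn n))) ^ (-((n : ℝ)⁻¹)))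

/-- The Gram-determinant Jacobian `Jac(M) = √(det (M Mᵀ))` of a `p × m` matrix,
which equals the modulus of the Jacobian determinant of the restriction of the
associated linear map to the orthogonal complement of its kernel when the map is
surjective, and `0` otherwise. -/
def gramJac {p m : ℕ} (M : Matrix (Fin p) (Fin m) ℝ) : ℝ :=
  Real.sqrt (M * M.transpose).det

/-- The Jacobian of a linear map between Euclidean spaces. -/
def linJac {d e : ℕ} (L : EuclideanSpace ℝ (Fin d) →ₗ[ℝ] EuclideanSpace ℝ (Fin e)) : ℝ :=
  gramJac (LinearMap.toMatrix (EuclideanSpace.basisFun (Fin d) ℝ).toBasis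
    (EuclideanSpace.basisFun (Fin e) ℝ).toBasis L)

/-! Write `u_n = log 𝔫(σ, ‖σ'‖+1; n)`. Since `Df^n` maps the cone `K_{‖σ'‖+1}` into itself, every
preimage counted at time `m + n` is a preimage counted at time `n` of a point counted at time
`m`, so `(u_n)` is subadditive and, by Fekete, `𝔫(σ) = exp (inf_N u_N / N) ≤ 𝔫(σ, ‖σ'‖+1; N)^{1/N}`
for every `N ≥ 1`. If `‖σ' - τ'‖_∞ ≤ Λ^{-N}`, sliding each preimage vertically onto the
corresponding preimage for `τ` bounds the counts of `σ` by those of `τ` in the wider cone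
`K_{‖τ'‖+2}`, and this cone is mapped into `K_{‖τ'‖+1}` after `m` steps with `λ^m ≥ 2`, at the cost
of the factor `(ℓ+2)^m` bounding the number of preimages. Hence
`𝔫(σ, ‖σ'‖+1; N+m) ≤ (ℓ+2)^m 𝔫(τ, ‖τ'‖+1; N)`, and taking `N` large gives `𝔫(σ) < e^ρ`
whenever `𝔫(τ) < e^ρ` and `σ` is `C^1`-close, hence `C^r`-close, to `τ`. -/

open Matrix

lemma rep_mem_Ico (x : 𝕊) : rep x ∈ Set.Ico (0 : ℝ) 1 := by
  simpa [rep] using (AddCircle.equivIco 1 0 x).2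

lemma rep_injective : Function.Injective rep := fun _ _ h =>
  (AddCircle.equivIco 1 0).injective (Subtype.ext h)

lemma coe_rep (x : 𝕊) : ((rep x : ℝ) : 𝕊) = x :=
  (AddCircle.equivIco 1 0).symm_apply_apply x

lemma ncard_le_ncard_mul_of_subset_biUnion {α β : Type*} {S : Set α} {T : Set β}
    (hT : T.Finite) {F : β → Set α} (hF : ∀ w ∈ T, (F w).Finite) {M : ℝ}
    (hM : ∀ w ∈ T, ((F w).ncard : ℝ) ≤ M) (hS : S ⊆ ⋃ w ∈ T, F w) :
    (S.ncard : ℝ) ≤ T.ncard * M := by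
  have hU : (⋃ w ∈ hT.toFinset, F w) = ⋃ w ∈ T, F w := by simp
  calc (S.ncard : ℝ) ≤ ((⋃ w ∈ hT.toFinset, F w).ncard : ℝ) := by
        rw [hU]; exact_mod_cast Set.ncard_le_ncard hS (hT.biUnion hF)
    _ ≤ ∑ w ∈ hT.toFinset, ((F w).ncard : ℝ) := by
        exact_mod_cast hT.toFinset.set_ncard_biUnion_le F
    _ ≤ hT.toFinset.card • M := Finset.sum_le_card_nsmul _ _ _ (by simpa using hM)
    _ = T.ncard * M := by rw [nsmul_eq_mul, Set.ncard_eq_toFinset_card _ hT]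

lemma finite_preimage_iterate_and_ncard_le {α : Type*} {f : α → α} {C : ℝ}
    (hf : ∀ y, (f ⁻¹' {y}).Finite ∧ ((f ⁻¹' {y}).ncard : ℝ) ≤ C) :
    ∀ (n : ℕ) (y : α), (f^[n] ⁻¹' {y}).Finite ∧ ((f^[n] ⁻¹' {y}).ncard : ℝ) ≤ C ^ n
  | 0, y => by simp
  | n + 1, y => by
    obtain ⟨hfin, hcard⟩ := finite_preimage_iterate_and_ncard_le hf n y
    have hsub : f^[n + 1] ⁻¹' {y} ⊆ ⋃ w ∈ f^[n] ⁻¹' {y}, f ⁻¹' {w} := fun x hx => by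
      simp only [Set.mem_iUnion, Set.mem_preimage, Set.mem_singleton_iff,
        Function.iterate_succ_apply] at hx ⊢
      exact ⟨f x, hx, rfl⟩
    have hC : 0 ≤ C := (Nat.cast_nonneg _).trans (hf y).2
    refine ⟨(hfin.biUnion fun w _ => (hf w).1).subset hsub, ?_⟩
    calc (((f^[n + 1]) ⁻¹' {y}).ncard : ℝ) ≤ ((f^[n]) ⁻¹' {y}).ncard * C :=
          ncard_le_ncard_mul_of_subset_biUnion hfin (fun w _ => (hf w).1)
            (fun w _ => (hf w).2) hsub
      _ ≤ C ^ n * C := by gcongr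
      _ = C ^ (n + 1) := (pow_succ C n).symm

namespace ExpMap

variable (E : ExpMap r ℓ)

lemma lam_pos : 0 < E.lam := one_pos.trans E.one_lt_lam

lemma Lam_pos : 0 < E.Lam := E.lam_pos.trans_le E.lam_le_Lam

lemma deriv_pos (x : ℝ) : 0 < deriv E.toFun x := E.lam_pos.trans_le (E.lam_le_deriv x)

lemma strictMono : StrictMono E.toFun := strictMono_of_deriv_pos E.deriv_pos

/-- Every preimage `x` of `y` is determined by the integer `E (rep x) - rep y`, which lies in
the interval `(E 0 - 1, E 0 + ℓ)` because `E` maps `[0, 1)` onto `[E 0, E 0 + ℓ)`. -/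
lemma finite_preimage_map_and_ncard_le (y : 𝕊) :
    (E.map ⁻¹' {y}).Finite ∧ ((E.map ⁻¹' {y}).ncard : ℝ) ≤ ℓ + 2 := by
  set c := E.toFun 0
  set I : Finset ℤ := Finset.Ioo ⌊c - 1⌋ ⌈c + ℓ⌉
  let k : 𝕊 → ℤ := fun x => ⌊E.toFun (rep x) - rep y⌋
  have hk : ∀ x ∈ E.map ⁻¹' {y}, (k x : ℝ) = E.toFun (rep x) - rep y := by
    intro x hx
    have hx' : ((E.toFun (rep x) : ℝ) : 𝕊) = ((rep y : ℝ) : 𝕊) := by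
      rw [coe_rep]; exact hx
    obtain ⟨j, hj⟩ := AddSubgroup.mem_zmultiples_iff.mp
      (QuotientAddGroup.eq_iff_sub_mem.mp hx')
    have hj' : (j : ℝ) = E.toFun (rep x) - rep y := by simpa using hj
    simp only [k, ← hj', Int.floor_intCast]
  have hinj : Set.InjOn k (E.map ⁻¹' {y}) := fun x hx x' hx' hxx => by
    have h := congrArg (fun j : ℤ => (j : ℝ)) hxx
    simp only [hk x hx, hk x' hx', sub_left_inj] at h
    exact rep_injective (E.strictMono.injective h)
  have hmaps : Set.MapsTo k (E.map ⁻¹' {y}) I := fun x hx => by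
    have hx0 := rep_mem_Ico x
    have hy0 := rep_mem_Ico y
    have h1 : c ≤ E.toFun (rep x) := E.strictMono.monotone hx0.1
    have h2 : E.toFun (rep x) < c + ℓ := by
      have h := E.strictMono hx0.2
      rwa [show (1 : ℝ) = 0 + 1 by norm_num, E.degree 0] at h
    rw [Finset.mem_coe, Finset.mem_Ioo, Int.floor_lt, Int.lt_ceil, hk x hx]
    constructor <;> linarith [hy0.1, hy0.2]
  have hI : (I.card : ℝ) ≤ ℓ + 2 := by
    have h1 : (⌈c + ℓ⌉ : ℝ) < c + ℓ + 1 := Int.ceil_lt_add_one _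
    have h2 : c - 1 - 1 < (⌊c - 1⌋ : ℝ) := Int.sub_one_lt_floor _
    have h3 : ⌈c + ℓ⌉ - ⌊c - 1⌋ - 1 < (ℓ : ℤ) + 2 := by
      have : ((⌈c + ℓ⌉ - ⌊c - 1⌋ - 1 : ℤ) : ℝ) < ℓ + 2 := by push_cast; linarith
      exact_mod_cast this
    have : I.card ≤ ℓ + 2 := by simp only [I, Int.card_Ioo]; omega
    exact_mod_cast this
  refine ⟨Set.Finite.of_finite_image ((Finset.finite_toSet I).subset hmaps.image_subset) hinj, ?_⟩
  calc ((E.map ⁻¹' {y}).ncard : ℝ) ≤ (I : Set ℤ).ncard := by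
        exact_mod_cast Set.ncard_le_ncard_of_injOn k hmaps hinj (Finset.finite_toSet I)
    _ ≤ ℓ + 2 := by rwa [Set.ncard_coe_finset]

def orbitDeriv : ℕ → 𝕊 → ℝ
  | 0, _ => 1
  | n + 1, x => orbitDeriv n (E.map x) * deriv E.toFun (rep x)

def shearSum (φ : ℝ → ℝ) : ℕ → 𝕊 → ℝ
  | 0, _ => 0
  | n + 1, x => shearSum φ n (E.map x) * deriv E.toFun (rep x) + φ (rep x)

lemma lam_pow_le_orbitDeriv : ∀ (n : ℕ) (x : 𝕊), E.lam ^ n ≤ E.orbitDeriv n x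
  | 0, _ => by simp [orbitDeriv]
  | n + 1, x => by
    rw [orbitDeriv, pow_succ]
    exact mul_le_mul (lam_pow_le_orbitDeriv n _) (E.lam_le_deriv _) E.lam_pos.le
      ((pow_pos E.lam_pos n).le.trans (lam_pow_le_orbitDeriv n _))

lemma one_le_orbitDeriv (n : ℕ) (x : 𝕊) : 1 ≤ E.orbitDeriv n x :=
  (one_le_pow₀ E.one_lt_lam.le).trans (E.lam_pow_le_orbitDeriv n x)

lemma orbitDeriv_pos (n : ℕ) (x : 𝕊) : 0 < E.orbitDeriv n x :=
  one_pos.trans_le (E.one_le_orbitDeriv n x)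

lemma orbitDeriv_le_Lam_pow : ∀ (n : ℕ) (x : 𝕊), E.orbitDeriv n x ≤ E.Lam ^ n
  | 0, _ => by simp [orbitDeriv]
  | n + 1, x => by
    rw [orbitDeriv, pow_succ]
    exact mul_le_mul (orbitDeriv_le_Lam_pow n _) (E.deriv_le_Lam _) (E.deriv_pos _).le
      (pow_pos E.Lam_pos n).le

lemma shearSum_sub (φ ψ : ℝ → ℝ) : ∀ (n : ℕ) (x : 𝕊),
    E.shearSum φ n x - E.shearSum ψ n x = E.shearSum (φ - ψ) n x
  | 0, _ => by simp [shearSum]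
  | n + 1, x => by
    simp only [shearSum, ← shearSum_sub φ ψ n, Pi.sub_apply]
    ring

lemma abs_shearSum_mul_le {φ : ℝ → ℝ} {c : ℝ} (hφ : ∀ t, |φ t| ≤ c) :
    ∀ (n : ℕ) (x : 𝕊), |E.shearSum φ n x| * (E.lam - 1) ≤ c * (E.orbitDeriv n x - 1)
  | 0, _ => by simp [shearSum, orbitDeriv]
  | n + 1, x => by
    have ih := abs_shearSum_mul_le hφ n (E.map x)
    have hE := E.deriv_pos (rep x)
    have hlam := E.lam_le_deriv (rep x)
    have hc : 0 ≤ c := (abs_nonneg _).trans (hφ 0)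
    have htri : |E.shearSum φ n (E.map x) * deriv E.toFun (rep x) + φ (rep x)|
        ≤ |E.shearSum φ n (E.map x)| * deriv E.toFun (rep x) + c := by
      refine (abs_add_le _ _).trans ?_
      rw [abs_mul, abs_of_pos hE]
      exact add_le_add_right (hφ _) _
    rw [shearSum, orbitDeriv]
    nlinarith [mul_le_mul_of_nonneg_right htri (sub_nonneg.mpr E.one_lt_lam.le),
      mul_le_mul_of_nonneg_right ih hE.le, mul_le_mul_of_nonneg_left hlam hc]

lemma lowerTri_mulVec_mem_cone {a b c R R' : ℝ} (ha : 0 < a) (hb : |b| * (E.lam - 1) ≤ c)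
    (hR : c + R ≤ R' * a) {u : Fin 2 → ℝ} (hu : u ∈ E.cone R) :
    !![a, 0; b, 1] *ᵥ u ∈ E.cone R' := by
  have hθ : 0 < E.lam - 1 := sub_pos.mpr E.one_lt_lam
  simp only [cone, Set.mem_ofPred_eq, Matrix.mulVec_fin_two, Matrix.of_apply,
    Matrix.cons_val', Matrix.cons_val_zero, Matrix.cons_val_one, Matrix.empty_val',
    Matrix.cons_val_fin_one, zero_mul, add_zero, one_mul] at hu ⊢
  rw [div_mul_eq_mul_div, le_div_iff₀ hθ] at hu ⊢
  rw [abs_mul, abs_of_pos ha]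
  nlinarith [abs_add_le (b * u 0) (u 1), abs_mul b (u 0), abs_nonneg (u 0),
    mul_le_mul_of_nonneg_right hb (abs_nonneg (u 0)),
    mul_le_mul_of_nonneg_right hR (abs_nonneg (u 0))]

lemma smul_mem_cone {R : ℝ} (c : ℝ) {u : Fin 2 → ℝ} (hu : u ∈ E.cone R) : c • u ∈ E.cone R := by
  simp only [cone, Set.mem_ofPred_eq, Pi.smul_apply, smul_eq_mul, abs_mul] at hu ⊢
  nlinarith [mul_le_mul_of_nonneg_left hu (abs_nonneg c)]

end ExpMap

namespace CrFun

variable {s : ℕ∞}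

lemma deriv_periodic (σ : CrFun s) : Function.Periodic (deriv σ.toFun) 1 := fun x => by
  rw [← deriv_comp_add_const, funext σ.periodic]

lemma deriv_fract (σ : CrFun s) (t : ℝ) : deriv σ.toFun (Int.fract t) = deriv σ.toFun t := by
  simpa only [Int.fract, zsmul_eq_mul, mul_one] using σ.deriv_periodic.sub_zsmul_eq (x := t) ⌊t⌋

lemma abs_deriv_le_dsup (σ : CrFun s) (hs : 1 ≤ s) (t : ℝ) : |deriv σ.toFun t| ≤ σ.dsup := by
  have hcont : Continuous (deriv σ.toFun) := σ.contDiff.continuous_deriv (mod_cast hs)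
  rw [← σ.deriv_fract]
  exact le_csSup (isCompact_Icc.image hcont.abs).bddAbove
    ⟨_, ⟨Int.fract_nonneg t, (Int.fract_lt_one t).le⟩, rfl⟩

lemma dsup_nonneg (σ : CrFun s) (hs : 1 ≤ s) : 0 ≤ σ.dsup :=
  (abs_nonneg _).trans (σ.abs_deriv_le_dsup hs 0)

lemma dsup_le_of_forall (σ : CrFun s) {c : ℝ} (hc : ∀ t, |deriv σ.toFun t| ≤ c) :
    σ.dsup ≤ c :=
  csSup_le ⟨_, 0, ⟨le_rfl, zero_le_one⟩, rfl⟩ (by rintro _ ⟨t, -, rfl⟩; exact hc t)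

lemma dsup_le_dsup_add {τ σ : CrFun s} (hs : 1 ≤ s) {e : ℝ}
    (hd : ∀ t, |deriv σ.toFun t - deriv τ.toFun t| ≤ e) : σ.dsup ≤ τ.dsup + e :=
  σ.dsup_le_of_forall fun t => by
    have := abs_sub_abs_le_abs_sub (deriv σ.toFun t) (deriv τ.toFun t)
    linarith [hd t, τ.abs_deriv_le_dsup hs t]

end CrFun

variable {s : ℕ∞}

def skewShift (E : ExpMap r ℓ) (σ : CrFun s) : ℕ → 𝕊 → 𝕊
  | 0, _ => 0
  | n + 1, x => ((σ.toFun (rep x) : ℝ) : 𝕊) + skewShift E σ n (E.map x)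

lemma iterate_skew (E : ExpMap r ℓ) (σ : CrFun s) : ∀ (n : ℕ) (ζ : 𝕊 × 𝕊),
    (skew E σ)^[n] ζ = (E.map^[n] ζ.1, ζ.2 + skewShift E σ n ζ.1)
  | 0, ζ => by simp [skewShift]
  | n + 1, ζ => by
    rw [Function.iterate_succ_apply, iterate_skew E σ n, Function.iterate_succ_apply, skewShift,
      ← add_assoc]
    rfl

lemma finite_preimage_iterate_skew_and_ncard_le (E : ExpMap r ℓ) (σ : CrFun s) (n : ℕ)
    (z : 𝕊 × 𝕊) : ((skew E σ)^[n] ⁻¹' {z}).Finite ∧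
      (((skew E σ)^[n] ⁻¹' {z}).ncard : ℝ) ≤ (ℓ + 2) ^ n := by
  refine finite_preimage_iterate_and_ncard_le (fun w => ?_) n z
  obtain ⟨hfin, hcard⟩ := E.finite_preimage_map_and_ncard_le w.1
  have hmaps : Set.MapsTo Prod.fst (skew E σ ⁻¹' {w}) (E.map ⁻¹' {w.1}) :=
    fun ζ hζ => congrArg Prod.fst hζ
  have hinj : Set.InjOn Prod.fst (skew E σ ⁻¹' {w}) := fun ζ hζ ζ' hζ' h => by
    have h2 : ζ.2 + _ = ζ'.2 + _ := (congrArg Prod.snd hζ).trans (congrArg Prod.snd hζ').symm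
    rw [h] at h2
    exact Prod.ext h (add_right_cancel h2)
  refine ⟨Set.Finite.of_finite_image (hfin.subset hmaps.image_subset) hinj, ?_⟩
  exact (Nat.cast_le.mpr (Set.ncard_le_ncard_of_injOn _ hmaps hinj hfin)).trans hcard

lemma jacn_eq (E : ExpMap r ℓ) (σ : CrFun s) : ∀ (n : ℕ) (ζ : 𝕊 × 𝕊),
    Jacn E σ n ζ = !![E.orbitDeriv n ζ.1, 0; E.shearSum (deriv σ.toFun) n ζ.1, 1]
  | 0, _ => by simp [Jacn, ExpMap.orbitDeriv, ExpMap.shearSum, Matrix.one_fin_two]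
  | n + 1, ζ => by
    rw [Jacn, jacn_eq E σ n, Jac1, Matrix.mul_fin_two]
    simp only [ExpMap.orbitDeriv, ExpMap.shearSum, skew, zero_mul, mul_zero, add_zero, zero_add,
      one_mul, mul_one]

lemma jacn_add (E : ExpMap r ℓ) (σ : CrFun s) (m : ℕ) : ∀ (n : ℕ) (ζ : 𝕊 × 𝕊),
    Jacn E σ (m + n) ζ = Jacn E σ m ((skew E σ)^[n] ζ) * Jacn E σ n ζ
  | 0, ζ => by simp [Jacn]
  | n + 1, ζ => by
    rw [← add_assoc, Jacn, jacn_add E σ m n, Function.iterate_succ_apply, Jacn, Matrix.mul_assoc]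

lemma isUnit_det_jacn (E : ExpMap r ℓ) (σ : CrFun s) (n : ℕ) (ζ : 𝕊 × 𝕊) :
    IsUnit (Jacn E σ n ζ).det := by
  rw [jacn_eq, Matrix.det_fin_two_of, mul_one, zero_mul, sub_zero]
  exact (E.orbitDeriv_pos n ζ.1).ne'.isUnit

/-- In particular `K_{‖σ'‖+1}` is invariant, and `K_{‖σ'‖+2}` is mapped into it once `λ^n ≥ 2`. -/
lemma jacn_mulVec_mem_cone (E : ExpMap r ℓ) {σ : CrFun s} (hs : 1 ≤ s) {n : ℕ} {R : ℝ}
    (hR : R ≤ σ.dsup + E.lam ^ n) (ζ : 𝕊 × 𝕊) {u : Fin 2 → ℝ} (hu : u ∈ E.cone R) :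
    Jacn E σ n ζ *ᵥ u ∈ E.cone (σ.dsup + 1) := by
  rw [jacn_eq]
  refine E.lowerTri_mulVec_mem_cone (E.orbitDeriv_pos n ζ.1)
    (E.abs_shearSum_mul_le (σ.abs_deriv_le_dsup hs) n ζ.1) ?_ hu
  linarith [E.lam_pow_le_orbitDeriv n ζ.1]

lemma jacn_eq_mul_shear (E : ExpMap r ℓ) (τ σ : CrFun s) (n : ℕ) (ζ ζ' : 𝕊 × 𝕊)
    (h : ζ.1 = ζ'.1) : Jacn E σ n ζ = Jacn E τ n ζ' *
      !![1, 0; E.shearSum (deriv σ.toFun) n ζ.1 - E.shearSum (deriv τ.toFun) n ζ.1, 1] := by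
  rw [jacn_eq, jacn_eq, Matrix.mul_fin_two, h]
  simp only [zero_mul, mul_zero, add_zero, zero_add, one_mul, mul_one, add_sub_cancel]

def conePreimages (E : ExpMap r ℓ) (σ : CrFun s) (R : ℝ) (n : ℕ) (z : 𝕊 × 𝕊)
    (v : Fin 2 → ℝ) : Set (𝕊 × 𝕊) :=
  {ζ | (skew E σ)^[n] ζ = z ∧ v ∈ (Jacn E σ n ζ).mulVec '' E.cone R}

section conePreimages

variable (E : ExpMap r ℓ) (σ : CrFun s) (R : ℝ) (n : ℕ)

lemma finite_conePreimages_and_ncard_le (z : 𝕊 × 𝕊) (v : Fin 2 → ℝ) :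
    (conePreimages E σ R n z v).Finite ∧
      ((conePreimages E σ R n z v).ncard : ℝ) ≤ (ℓ + 2) ^ n := by
  obtain ⟨hfin, hcard⟩ := finite_preimage_iterate_skew_and_ncard_le E σ n z
  have hsub : conePreimages E σ R n z v ⊆ (skew E σ)^[n] ⁻¹' {z} := fun _ hζ => hζ.1
  exact ⟨hfin.subset hsub, (Nat.cast_le.mpr (Set.ncard_le_ncard hsub hfin)).trans hcard⟩

lemma ncard_conePreimages_le_nQ {z : 𝕊 × 𝕊} {v : Fin 2 → ℝ} (hv : IsUnitVec v) :
    ((conePreimages E σ R n z v).ncard : ℝ) ≤ nQ E σ R n := by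
  refine le_csSup ⟨(ℓ + 2) ^ n, ?_⟩ ⟨z, v, hv, rfl⟩
  rintro _ ⟨z', v', -, rfl⟩
  exact (finite_conePreimages_and_ncard_le E σ R n z' v').2

lemma nQ_le_of_forall {M : ℝ}
    (hM : ∀ z v, IsUnitVec v → ((conePreimages E σ R n z v).ncard : ℝ) ≤ M) :
    nQ E σ R n ≤ M := by
  refine csSup_le ⟨_, 0, ![1, 0], by norm_num [IsUnitVec], rfl⟩ ?_
  rintro _ ⟨z, v, hv, rfl⟩
  exact hM z v hv

lemma conePreimages_smul {c : ℝ} (hc : c ≠ 0) (z : 𝕊 × 𝕊) (v : Fin 2 → ℝ) :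
    conePreimages E σ R n z (c • v) = conePreimages E σ R n z v := by
  have key : ∀ {c : ℝ} {v : Fin 2 → ℝ} {ζ : 𝕊 × 𝕊},
      v ∈ (Jacn E σ n ζ).mulVec '' E.cone R → c • v ∈ (Jacn E σ n ζ).mulVec '' E.cone R := by
    rintro c _ _ ⟨u, hu, rfl⟩
    exact ⟨c • u, E.smul_mem_cone c hu, Matrix.mulVec_smul _ c u⟩
  ext ζ
  refine and_congr_right fun _ => ⟨fun h => ?_, key⟩
  simpa [smul_smul, inv_mul_cancel₀ hc] using key (c := c⁻¹) h

lemma exists_isUnitVec_smul {v : Fin 2 → ℝ} (hv : v ≠ 0) : ∃ c ≠ (0 : ℝ), IsUnitVec (c • v) := by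
  have hpos : 0 < v 0 ^ 2 + v 1 ^ 2 := by
    by_contra! h
    exact hv (funext fun i => by
      fin_cases i <;> simp <;> nlinarith [sq_nonneg (v 0), sq_nonneg (v 1)])
  refine ⟨(√(v 0 ^ 2 + v 1 ^ 2))⁻¹, by positivity, ?_⟩
  simp only [IsUnitVec, Pi.smul_apply, smul_eq_mul, mul_pow, inv_pow, ← mul_add,
    Real.sq_sqrt hpos.le, inv_mul_cancel₀ hpos.ne']

lemma ncard_conePreimages_le_nQ_of_ne_zero {z : 𝕊 × 𝕊} {v : Fin 2 → ℝ} (hv : v ≠ 0) :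
    ((conePreimages E σ R n z v).ncard : ℝ) ≤ nQ E σ R n := by
  obtain ⟨c, hc, hcv⟩ := exists_isUnitVec_smul hv
  rw [← conePreimages_smul E σ R n hc]
  exact ncard_conePreimages_le_nQ E σ R n hcv

lemma one_le_nQ {R : ℝ} (hR : 0 ≤ R) : 1 ≤ nQ E σ R n := by
  set ζ₀ : 𝕊 × 𝕊 := (0, 0)
  set v := Jacn E σ n ζ₀ *ᵥ ![1, 0]
  have hv : v ≠ 0 := fun h =>
    (E.orbitDeriv_pos n ζ₀.1).ne' (by simpa [v, jacn_eq] using congrFun h 0)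
  have hmem : ζ₀ ∈ conePreimages E σ R n ((skew E σ)^[n] ζ₀) v :=
    ⟨rfl, ![1, 0], by simpa [ExpMap.cone] using div_nonneg hR (sub_nonneg.mpr E.one_lt_lam.le), rfl⟩
  have hfin := (finite_conePreimages_and_ncard_le E σ R n ((skew E σ)^[n] ζ₀) v).1
  calc (1 : ℝ) ≤ (conePreimages E σ R n ((skew E σ)^[n] ζ₀) v).ncard := by
        exact_mod_cast (Set.ncard_pos hfin).mpr ⟨ζ₀, hmem⟩
    _ ≤ nQ E σ R n := ncard_conePreimages_le_nQ_of_ne_zero E σ R n hv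

end conePreimages

section counting

variable (E : ExpMap r ℓ) {σ : CrFun s} (hs : 1 ≤ s)
include hs

lemma mem_conePreimages_add {R : ℝ} {m n : ℕ} (hR : R ≤ σ.dsup + E.lam ^ n)
    {z ζ : 𝕊 × 𝕊} {v : Fin 2 → ℝ} (hζ : ζ ∈ conePreimages E σ R (m + n) z v) :
    (skew E σ)^[n] ζ ∈ conePreimages E σ (σ.dsup + 1) m z v ∧
      ζ ∈ conePreimages E σ R n ((skew E σ)^[n] ζ)
        ((Jacn E σ m ((skew E σ)^[n] ζ))⁻¹ *ᵥ v) := by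
  obtain ⟨hz, u, hu, rfl⟩ := hζ
  have hJ := jacn_add E σ m n ζ
  refine ⟨⟨by rwa [← Function.iterate_add_apply], _, jacn_mulVec_mem_cone E hs hR ζ hu,
    by rw [Matrix.mulVec_mulVec, hJ]⟩, rfl, u, hu, ?_⟩
  rw [hJ, Matrix.mulVec_mulVec, ← Matrix.mul_assoc,
    Matrix.nonsing_inv_mul _ (isUnit_det_jacn E σ m _), Matrix.one_mul]

lemma nQ_add_le_mul (m n : ℕ) :
    nQ E σ (σ.dsup + 1) (m + n) ≤ nQ E σ (σ.dsup + 1) m * nQ E σ (σ.dsup + 1) n := by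
  set R := σ.dsup + 1
  refine nQ_le_of_forall _ _ _ _ fun z v hv => ?_
  have hv0 : v ≠ 0 := by rintro rfl; norm_num [IsUnitVec] at hv
  have hR : R ≤ σ.dsup + E.lam ^ n := by linarith [one_le_pow₀ (n := n) E.one_lt_lam.le]
  set T := conePreimages E σ R m z v
  have hsub : conePreimages E σ R (m + n) z v ⊆
      ⋃ w ∈ T, conePreimages E σ R n w ((Jacn E σ m w)⁻¹ *ᵥ v) := fun ζ hζ =>
    Set.mem_biUnion (mem_conePreimages_add E hs hR hζ).1 (mem_conePreimages_add E hs hR hζ).2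
  have hinv : ∀ w, (Jacn E σ m w)⁻¹ *ᵥ v ≠ 0 := fun w h => hv0 <| by
    have := congrArg (Jacn E σ m w *ᵥ ·) h
    rwa [Matrix.mulVec_mulVec, Matrix.mul_nonsing_inv _ (isUnit_det_jacn E σ m w),
      Matrix.one_mulVec, Matrix.mulVec_zero] at this
  calc ((conePreimages E σ R (m + n) z v).ncard : ℝ) ≤ T.ncard * nQ E σ R n :=
        ncard_le_ncard_mul_of_subset_biUnion (finite_conePreimages_and_ncard_le E σ R m z v).1
          (fun w _ => (finite_conePreimages_and_ncard_le E σ R n w _).1)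
          (fun w _ => ncard_conePreimages_le_nQ_of_ne_zero E σ R n (hinv w)) hsub
    _ ≤ nQ E σ R m * nQ E σ R n :=
        mul_le_mul_of_nonneg_right (ncard_conePreimages_le_nQ E σ R m hv)
          (zero_le_one.trans (one_le_nQ E σ n (by linarith [σ.dsup_nonneg hs])))

/-- After `m` steps with `λ^m ≥ 2` the wider cone `K_{‖σ'‖+2}` is mapped into `K_{‖σ'‖+1}`. -/
lemma nQ_add_le_pow_mul {m : ℕ} (hm : 2 ≤ E.lam ^ m) (n : ℕ) :
    nQ E σ (σ.dsup + 2) (n + m) ≤ (ℓ + 2) ^ m * nQ E σ (σ.dsup + 1) n := by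
  refine nQ_le_of_forall _ _ _ _ fun z v hv => ?_
  set T := conePreimages E σ (σ.dsup + 1) n z v
  have hsub : conePreimages E σ (σ.dsup + 2) (n + m) z v ⊆ ⋃ w ∈ T, (skew E σ)^[m] ⁻¹' {w} :=
    fun ζ hζ => Set.mem_biUnion (mem_conePreimages_add E hs (by linarith) hζ).1 rfl
  calc ((conePreimages E σ (σ.dsup + 2) (n + m) z v).ncard : ℝ) ≤ T.ncard * (ℓ + 2) ^ m :=
        ncard_le_ncard_mul_of_subset_biUnion
          (finite_conePreimages_and_ncard_le E σ _ n z v).1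
          (fun w _ => (finite_preimage_iterate_skew_and_ncard_le E σ m w).1)
          (fun w _ => (finite_preimage_iterate_skew_and_ncard_le E σ m w).2) hsub
    _ ≤ nQ E σ (σ.dsup + 1) n * (ℓ + 2) ^ m :=
        mul_le_mul_of_nonneg_right (ncard_conePreimages_le_nQ E σ _ n hv) (by positivity)
    _ = (ℓ + 2) ^ m * nQ E σ (σ.dsup + 1) n := mul_comm _ _

variable {τ : CrFun s} {n : ℕ} (hd : ∀ t, |deriv σ.toFun t - deriv τ.toFun t| ≤ (E.Lam ^ n)⁻¹)
include hd

lemma shear_mulVec_mem_cone (x : 𝕊) {u : Fin 2 → ℝ} (hu : u ∈ E.cone (σ.dsup + 1)) :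
    !![1, 0; E.shearSum (deriv σ.toFun) n x - E.shearSum (deriv τ.toFun) n x, 1] *ᵥ u ∈
      E.cone (τ.dsup + 2) := by
  have hb := E.abs_shearSum_mul_le (φ := deriv σ.toFun - deriv τ.toFun) hd n x
  rw [← E.shearSum_sub] at hb
  refine E.lowerTri_mulVec_mem_cone one_pos hb ?_ hu
  have hΛ : (E.Lam ^ n)⁻¹ * E.orbitDeriv n x ≤ 1 := by
    rw [inv_mul_le_iff₀ (pow_pos E.Lam_pos n), mul_one]
    exact E.orbitDeriv_le_Lam_pow n x
  linarith [CrFun.dsup_le_dsup_add hs hd]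

/-- Moving every preimage of `z` under `f_{E,σ}^n` vertically onto the corresponding preimage
under `f_{E,τ}^n` injects the counted set for `σ` into the one for `τ`. -/
lemma nQ_le_nQ_of_deriv_close : nQ E σ (σ.dsup + 1) n ≤ nQ E τ (τ.dsup + 2) n := by
  refine nQ_le_of_forall _ _ _ _ fun z v hv => ?_
  let g : 𝕊 × 𝕊 → 𝕊 × 𝕊 := fun ζ => (ζ.1, z.2 - skewShift E τ n ζ.1)
  have hz : ∀ ζ ∈ conePreimages E σ (σ.dsup + 1) n z v,
      E.map^[n] ζ.1 = z.1 ∧ ζ.2 + skewShift E σ n ζ.1 = z.2 := fun ζ hζ => by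
    rw [← hζ.1, iterate_skew]; exact ⟨rfl, rfl⟩
  have hmaps : Set.MapsTo g (conePreimages E σ (σ.dsup + 1) n z v)
      (conePreimages E τ (τ.dsup + 2) n z v) := by
    rintro ζ ⟨hζ, u, hu, rfl⟩
    refine ⟨?_, _, shear_mulVec_mem_cone E hs hd ζ.1 hu, ?_⟩
    · rw [iterate_skew, (hz ζ ⟨hζ, u, hu, rfl⟩).1, sub_add_cancel]
    · rw [Matrix.mulVec_mulVec, ← jacn_eq_mul_shear E τ σ n ζ (g ζ) rfl]
  have hinj : Set.InjOn g (conePreimages E σ (σ.dsup + 1) n z v) := fun ζ hζ ζ' hζ' h => by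
    have h1 : ζ.1 = ζ'.1 := (Prod.ext_iff.mp h).1
    have h2 := (hz ζ hζ).2.trans (hz ζ' hζ').2.symm
    rw [h1] at h2
    exact Prod.ext h1 (add_right_cancel h2)
  calc ((conePreimages E σ (σ.dsup + 1) n z v).ncard : ℝ)
      ≤ (conePreimages E τ (τ.dsup + 2) n z v).ncard := by
        exact_mod_cast Set.ncard_le_ncard_of_injOn g hmaps hinj
          (finite_conePreimages_and_ncard_le E τ _ n z v).1
    _ ≤ nQ E τ (τ.dsup + 2) n := ncard_conePreimages_le_nQ E τ _ n hv

end counting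

def logCount (E : ExpMap r ℓ) (σ : CrFun s) (n : ℕ) : ℝ := Real.log (nQ E σ (σ.dsup + 1) n)

section logCount

variable (E : ExpMap r ℓ) (σ : CrFun s) (hs : 1 ≤ s)
include hs

lemma nQ_pos (n : ℕ) : 0 < nQ E σ (σ.dsup + 1) n :=
  one_pos.trans_le (one_le_nQ E σ n (by linarith [σ.dsup_nonneg hs]))

lemma subadditive_logCount : Subadditive (logCount E σ) := fun m n => by
  rw [logCount, logCount, logCount, ← Real.log_mul (nQ_pos E σ hs m).ne' (nQ_pos E σ hs n).ne']
  exact Real.log_le_log (nQ_pos E σ hs _) (nQ_add_le_mul E hs m n)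

lemma bddBelow_logCount_div : BddBelow (Set.range fun n : ℕ => logCount E σ n / n) :=
  ⟨0, by
    rintro _ ⟨n, rfl⟩
    exact div_nonneg (Real.log_nonneg (one_le_nQ E σ n (by linarith [σ.dsup_nonneg hs])))
      n.cast_nonneg⟩

lemma nlim_eq_exp_lim : nlim E σ = Real.exp (subadditive_logCount E σ hs).lim := by
  refine Tendsto.limUnder_eq ?_
  have h := (Real.continuous_exp.tendsto _).comp
    ((subadditive_logCount E σ hs).tendsto_lim (bddBelow_logCount_div E σ hs))
  refine h.congr fun n => ?_
  rw [Function.comp_apply, Real.rpow_def_of_pos (nQ_pos E σ hs n), logCount, div_eq_mul_inv]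

lemma nlim_lt_exp_of_logCount_lt {N : ℕ} (hN : N ≠ 0) {ρ : ℝ} (h : logCount E σ N < ρ * N) :
    nlim E σ < Real.exp ρ := by
  rw [nlim_eq_exp_lim E σ hs, Real.exp_lt_exp]
  refine ((subadditive_logCount E σ hs).lim_le_div (bddBelow_logCount_div E σ hs) hN).trans_lt ?_
  rwa [div_lt_iff₀ (by positivity)]

lemma eventually_logCount_add_lt {ρ : ℝ} (h : nlim E σ < Real.exp ρ) (c : ℝ) :
    ∀ᶠ n : ℕ in atTop, logCount E σ n + c < ρ * n := by
  set L := (subadditive_logCount E σ hs).lim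
  have hL : L < ρ := by rwa [nlim_eq_exp_lim E σ hs, Real.exp_lt_exp] at h
  have h1 : ∀ᶠ n : ℕ in atTop, logCount E σ n / n < (L + ρ) / 2 :=
    ((subadditive_logCount E σ hs).tendsto_lim (bddBelow_logCount_div E σ hs)).eventually_lt_const
      (by linarith)
  have h2 : ∀ᶠ n : ℕ in atTop, c < (ρ - L) / 2 * n :=
    (tendsto_natCast_atTop_atTop.const_mul_atTop (by linarith)).eventually_gt_atTop c
  filter_upwards [h1, h2, eventually_gt_atTop 0] with n hn1 hn2 hn0
  rw [div_lt_iff₀ (by exact_mod_cast hn0)] at hn1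
  linarith

lemma logCount_add_le_of_deriv_close {τ : CrFun s} {m : ℕ} (hm : 2 ≤ E.lam ^ m) {n : ℕ}
    (hd : ∀ t, |deriv σ.toFun t - deriv τ.toFun t| ≤ (E.Lam ^ (n + m))⁻¹) :
    logCount E σ (n + m) ≤ logCount E τ n + m * Real.log (ℓ + 2) := by
  calc logCount E σ (n + m) ≤ Real.log ((ℓ + 2) ^ m * nQ E τ (τ.dsup + 1) n) :=
        Real.log_le_log (nQ_pos E σ hs _)
          ((nQ_le_nQ_of_deriv_close E hs hd).trans (nQ_add_le_pow_mul E hs hm n))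
    _ = logCount E τ n + m * Real.log (ℓ + 2) := by
        rw [Real.log_mul (by positivity) (nQ_pos E τ hs n).ne', Real.log_pow, logCount, add_comm]

end logCount

lemma bddAbove_crDist_set {r : ℕ} {f g : ℝ → ℝ} (hf : ContDiff ℝ r f) (hg : ContDiff ℝ r g) :
    BddAbove {c : ℝ | ∃ i ≤ r, ∃ x ∈ Set.Icc (0 : ℝ) 1,
      c = |iteratedDeriv i f x - iteratedDeriv i g x|} := by
  have hU : {c : ℝ | ∃ i ≤ r, ∃ x ∈ Set.Icc (0 : ℝ) 1,
      c = |iteratedDeriv i f x - iteratedDeriv i g x|} =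
      ⋃ i ∈ Set.Iic r, (fun x => |iteratedDeriv i f x - iteratedDeriv i g x|) '' Set.Icc 0 1 := by
    ext
    simp [eq_comm]
  rw [hU, (Set.finite_Iic r).bddAbove_biUnion]
  intro i hi
  have hi' : (i : WithTop ℕ∞) ≤ r := mod_cast hi
  exact (isCompact_Icc.image ((hf.continuous_iteratedDeriv i hi').sub
    (hg.continuous_iteratedDeriv i hi')).abs).bddAbove

lemma abs_deriv_sub_le_crDist {r : ℕ} (hr : 1 ≤ r) (τ σ : CrFun r) (t : ℝ) :
    |deriv σ.toFun t - deriv τ.toFun t| ≤ crDist r τ.toFun σ.toFun := by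
  rw [← σ.deriv_fract, ← τ.deriv_fract, abs_sub_comm]
  exact le_csSup (bddAbove_crDist_set τ.contDiff σ.contDiff)
    ⟨1, hr, _, ⟨Int.fract_nonneg t, (Int.fract_lt_one t).le⟩, by simp [iteratedDeriv_one]⟩

theorem stmt5_general (r ℓ : ℕ) (hr : 2 ≤ r) (E : ExpMap r ℓ)
    (D : Set (CrFun r))
    (ρ : ℝ) :
    ∀ τ ∈ D, nlim E τ < Real.exp ρ →
      ∃ ε > (0:ℝ), ∀ σ ∈ D, crDist r τ.toFun σ.toFun < ε → nlim E σ < Real.exp ρ := by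
  intro τ _ hτ
  have hr1 : 1 ≤ r := by omega
  have hs : (1 : ℕ∞) ≤ r := mod_cast hr1
  obtain ⟨m, hm⟩ := pow_unbounded_of_one_lt (2 : ℝ) E.one_lt_lam
  obtain ⟨n, hn⟩ := (eventually_logCount_add_lt E τ hs hτ (m * (Real.log (ℓ + 2) - ρ))).exists
  refine ⟨(E.Lam ^ (n + m))⁻¹, inv_pos.mpr (pow_pos E.Lam_pos _), fun σ _ hσ => ?_⟩
  have hm0 : m ≠ 0 := by rintro rfl; norm_num at hm
  refine nlim_lt_exp_of_logCount_lt E σ hs (N := n + m) (by omega) ?_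
  calc logCount E σ (n + m) ≤ logCount E τ n + m * Real.log (ℓ + 2) :=
        logCount_add_le_of_deriv_close E σ hs hm.le fun t =>
          (abs_deriv_sub_le_crDist hr1 τ σ t).trans hσ.le
    _ < ρ * (n + m : ℕ) := by push_cast; linarith

/-- Let `D` be a bounded open subset of `C^r(𝕊¹)` and fix `R` with
`R > ‖τ'‖_∞` for all `τ ∈ D`. For every `ρ > 0`, the set `{τ ∈ D : 𝔫(τ) < e^ρ}` is open
in `D` for the `C^r` topology. -/
theorem stmt5 (r ℓ : ℕ) (hr : 2 ≤ r) (hl : 2 ≤ ℓ) (E : ExpMap r ℓ)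
    (D : Set (CrFun r))
    (hDopen : ∀ τ ∈ D, ∃ ε > (0:ℝ), ∀ σ : CrFun r, crDist r τ.toFun σ.toFun < ε → σ ∈ D)
    (hDbdd : ∃ M : ℝ, ∀ τ ∈ D, crDist r τ.toFun 0 ≤ M)
    (R : ℝ) (hR : ∀ τ ∈ D, τ.dsup < R)
    (ρ : ℝ) (hρ : 0 < ρ) :
    ∀ τ ∈ D, nlim E τ < Real.exp ρ →
      ∃ ε > (0:ℝ), ∀ σ ∈ D, crDist r τ.toFun σ.toFun < ε → nlim E σ < Real.exp ρ :=
  stmt5_general r ℓ hr E D ρ
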